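/- Let R be a Noetherian standard graded ring with (R₀, m₀, k) local and M ≠ 0 a finitely generated graded R-module. Then 0 ≤ reg_R(M,k) + indeg(M) ≤ reg_R(k,k). -/

import Mathlib

open DirectSum CategoryTheory CategoryTheory.Limits Opposite

noncomputable section
section GradedSetup

variable (R₀ : Type) [CommRing R₀] (R : Type) [CommRing R] [Algebra R₀ R]
variable (𝒜 : ℤ → Submodule R₀ R)

/-- `R = R₀[R₁]` is a standard graded ring: nonnegatively graded, `𝒜 0 = R₀·1` and
generated in degree one. -/
def IsStandardGraded : Prop :=
  (∀ n : ℤ, n < 0 → 𝒜 n = ⊥) ∧ (𝒜 0 = 1) ∧ (∀ n : ℤ, 0 ≤ n → 𝒜 (n + 1) = 𝒜 n * 𝒜 1)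

/-- The irrelevant ideal `R₊` of a graded ring. -/
def irrelevant : Ideal R :=
  Ideal.span (⋃ n : {n : ℤ // 0 < n}, ((𝒜 n.1 : Submodule R₀ R) : Set R))

/-- The graded maximal ideal `m₀ R + R₊` when `R₀` is local. -/
def gradedMax [IsLocalRing R₀] : Ideal R :=
  irrelevant R₀ R 𝒜 ⊔
    Ideal.span ((algebraMap R₀ R) '' (IsLocalRing.maximalIdeal R₀ : Set R₀))

end GradedSetup

section Degrees

variable {A M : Type} [Semiring A] [AddCommMonoid M] [Module A M]

/-- The set of degrees in which a graded module is nonzero. -/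
def degSet (ℳ : ℤ → Submodule A M) : Set ℤ := {n | ℳ n ≠ ⊥}

/-- The initial degree of a graded module. -/
noncomputable def indeg (ℳ : ℤ → Submodule A M) : ℤ := sInf (degSet ℳ)

/-- The end (top degree) of a graded module. -/
noncomputable def endeg (ℳ : ℤ → Submodule A M) : ℤ := sSup (degSet ℳ)

end Degrees
section FreeRes

variable (R₀ : Type) [CommRing R₀] (R : Type) [CommRing R] [Algebra R₀ R]
variable (𝒜 : ℤ → Submodule R₀ R)

/-- The graded free module `⊕_j R(-j)^{β j}`. -/
abbrev stdFree (β : ℤ → ℕ) : Type := (Σ j : ℤ, Fin (β j)) →₀ R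

/-- The degree `n` component of `⊕_j R(-j)^{β j}`. -/
def stdFreeGrading (β : ℤ → ℕ) (n : ℤ) : Submodule R₀ (stdFree R β) where
  carrier := {f | ∀ p : Σ j : ℤ, Fin (β j), f p ∈ 𝒜 (n - p.1)}
  add_mem' := fun hf hg p => by
    rw [Finsupp.add_apply]; exact add_mem (hf p) (hg p)
  zero_mem' := fun p => by simp
  smul_mem' := fun c f hf p => by
    rw [Finsupp.smul_apply]; exact Submodule.smul_mem _ c (hf p)

variable (M : Type) [AddCommGroup M] [Module R M] [Module R₀ M]

/-- A graded free resolution of a graded `R`-module `(M, ℳ)`, recorded through its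
graded Betti numbers `β`, differentials `d` and augmentation `aug`. -/
structure GradedFreeRes (ℳ : ℤ → Submodule R₀ M) where
  β : ℕ → ℤ → ℕ
  finite : ∀ i, (Function.support (β i)).Finite
  d : (i : ℕ) → stdFree R (β (i + 1)) →ₗ[R] stdFree R (β i)
  aug : stdFree R (β 0) →ₗ[R] M
  aug_surj : Function.Surjective aug
  exact_aug : Function.Exact (d 0) aug
  exact : ∀ i, Function.Exact (d (i + 1)) (d i)
  graded_d : ∀ i n x, x ∈ stdFreeGrading R₀ R 𝒜 (β (i + 1)) n →
    d i x ∈ stdFreeGrading R₀ R 𝒜 (β i) n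
  graded_aug : ∀ n x, x ∈ stdFreeGrading R₀ R 𝒜 (β 0) n → aug x ∈ ℳ n

/-- A minimal graded free resolution: a graded free resolution whose differentials map into
`m·F` where `m` is the given (graded) maximal ideal. -/
structure MinGradedFreeRes (mIdeal : Ideal R) (ℳ : ℤ → Submodule R₀ M)
    extends GradedFreeRes R₀ R 𝒜 M ℳ where
  minimal : ∀ i, LinearMap.range (d i) ≤ mIdeal • (⊤ : Submodule R (stdFree R (β i)))

/-- The initial degree of the `i`-th Tor module `Tor_i(M,k)` read off from a minimal graded
free resolution: the smallest twist appearing in homological degree `i`. -/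
def torDegSet {mIdeal : Ideal R} {ℳ : ℤ → Submodule R₀ M}
    (F : MinGradedFreeRes R₀ R 𝒜 M mIdeal ℳ) (i : ℕ) : Set ℤ :=
  {j | F.β i j ≠ 0}

/-- The set `{i - j | β_{ij} ≠ 0}` whose supremum is `reg_R(M,k) = max_i {i - indeg Tor_i(M,k)}`. -/
def regSet {mIdeal : Ideal R} {ℳ : ℤ → Submodule R₀ M}
    (F : MinGradedFreeRes R₀ R 𝒜 M mIdeal ℳ) : Set ℤ :=
  {z | ∃ (i : ℕ) (j : ℤ), F.β i j ≠ 0 ∧ z = (i : ℤ) - j}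

end FreeRes
section Residue

variable (R₀ : Type) [CommRing R₀] [IsLocalRing R₀] (R : Type) [CommRing R] [Algebra R₀ R]
variable (𝒜 : ℤ → Submodule R₀ R)

/-- The residue field `k = R/(m₀ R + R₊)` of a standard graded ring over a local base. -/
abbrev resField : Type := R ⧸ gradedMax R₀ R 𝒜

/-- The grading of the residue field: concentrated in degree `0`. -/
def resFieldGrading (n : ℤ) : Submodule R₀ (resField R₀ R 𝒜) :=
  if n = 0 then ⊤ else ⊥

end Residue

/-!
Let `F` and `G` be the minimal graded free resolutions of `M` and `k`. Since `R` lives in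
nonnegative degrees, every nonzero homogeneous element of `M` has degree at least the smallest
twist `j₀` of `F₀`, so `j₀ ≤ indeg M`, and `(i, j) = (0, j₀)` gives the lower bound. For the upper
bound, `β_{ij}(M) ≠ 0` means `Tor_i(M, k)_j ≠ 0`; computing this Tor through the double complex
`F ⊗ G` shows `M_{j - j'} ≠ 0` for some twist `j'` of `G_i`, whence `i - j + indeg M ≤ i - j'`.
-/

/-- A `ℤ`-grading presented by its homogeneous elements and the projections onto them; unlike
`DirectSum.Decomposition` it is easily transported to `ι →₀ N` with shifted degrees. -/
structure ProjGrading (N : Type) [AddCommMonoid N] where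
  mem : ℤ → N → Prop
  proj : ℤ → N →+ N
  proj_mem : ∀ n x, mem n (proj n x)
  proj_of_mem : ∀ {n x}, mem n x → proj n x = x
  proj_of_mem_of_ne : ∀ {m n x}, m ≠ n → mem m x → proj n x = 0
  exists_eq_sum_proj : ∀ x, ∃ S : Finset ℤ, x = ∑ n ∈ S, proj n x

namespace ProjGrading

variable {N N' : Type} [AddCommMonoid N] [AddCommMonoid N'] (g : ProjGrading N)

def ofDecomposition {A : Type} [Semiring A] [Module A N] (𝒩 : ℤ → Submodule A N)
    [DirectSum.Decomposition 𝒩] : ProjGrading N where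
  mem n x := x ∈ 𝒩 n
  proj n :=
    { toFun x := DirectSum.decompose 𝒩 x n
      map_zero' := by simp
      map_add' x y := by simp }
  proj_mem n x := (DirectSum.decompose 𝒩 x n).2
  proj_of_mem h := by simp [DirectSum.decompose_of_mem_same 𝒩 h]
  proj_of_mem_of_ne h hx := by simp [DirectSum.decompose_of_mem_ne 𝒩 hx h]
  exists_eq_sum_proj x := by
    classical
    exact ⟨(DirectSum.decompose 𝒩 x).support, (DirectSum.sum_support_decompose 𝒩 x).symm⟩

def degreeZero : ProjGrading N where
  mem n x := n = 0 ∨ x = 0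
  proj n := if n = 0 then AddMonoidHom.id N else 0
  proj_mem n x := by by_cases hn : n = 0 <;> simp [hn]
  proj_of_mem {n x} h := by rcases h with rfl | rfl <;> simp
  proj_of_mem_of_ne {m n x} h hx := by
    rcases hx with rfl | rfl
    · simp [Ne.symm h]
    · simp
  exists_eq_sum_proj x := ⟨{0}, by simp⟩

lemma zero_mem (n : ℤ) : g.mem n 0 := by
  simpa using g.proj_mem n 0

lemma eq_sum_proj_of_subset {x : N} {S T : Finset ℤ} (hS : x = ∑ n ∈ S, g.proj n x)
    (hST : S ⊆ T) : x = ∑ n ∈ T, g.proj n x := by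
  refine hS.trans (Finset.sum_subset hST fun m _ hm => ?_)
  rw [hS, map_sum]
  exact Finset.sum_eq_zero fun n hn =>
    g.proj_of_mem_of_ne (fun h => hm (h ▸ hn)) (g.proj_mem n x)

def finsupp {ι : Type} (w : ι → ℤ) : ProjGrading (ι →₀ N) where
  mem n f := ∀ a, g.mem (n - w a) (f a)
  proj n :=
    { toFun f := Finsupp.onFinset f.support (fun a => g.proj (n - w a) (f a)) fun a h => by
        rw [Finsupp.mem_support_iff]
        rintro h0
        rw [h0, map_zero] at h
        exact h rfl
      map_zero' := by ext; simp
      map_add' f f' := by ext; simp }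
  proj_mem n f a := by simpa using g.proj_mem _ (f a)
  proj_of_mem h := by ext a; simpa using g.proj_of_mem (h a)
  proj_of_mem_of_ne hmn hf := by
    ext a; simpa using g.proj_of_mem_of_ne (fun h => hmn (by omega)) (hf a)
  exists_eq_sum_proj f := by
    classical
    choose S hS using fun a => g.exists_eq_sum_proj (f a)
    refine ⟨f.support.biUnion fun a => (S a).image (· + w a), ?_⟩
    ext a
    simp only [Finsupp.finsetSum_apply, AddMonoidHom.coe_mk, ZeroHom.coe_mk,
      Finsupp.onFinset_apply]
    by_cases ha : a ∈ f.support
    · have hshift := Finset.sum_map (f.support.biUnion fun a => (S a).image (· + w a))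
        (Equiv.subRight (w a)).toEmbedding fun m => g.proj m (f a)
      simp only [Equiv.coe_toEmbedding, Equiv.subRight_apply] at hshift
      rw [← hshift]
      refine g.eq_sum_proj_of_subset (hS a) fun m hm => Finset.mem_map.2
        ⟨m + w a, Finset.mem_biUnion.2 ⟨a, ha, Finset.mem_image_of_mem _ hm⟩, by simp⟩
    · simp [Finsupp.notMem_support_iff.1 ha]

def IsGraded (g' : ProjGrading N') (φ : N → N') : Prop :=
  ∀ n x, g.mem n x → g'.mem n (φ x)

variable {g}

lemma proj_map {g' : ProjGrading N'} {φ : N →+ N'} (hφ : g.IsGraded g' φ) (n : ℤ) (x : N) :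
    g'.proj n (φ x) = φ (g.proj n x) := by
  obtain ⟨S, hS⟩ := g.exists_eq_sum_proj x
  have hproj : g.proj n x = ∑ m ∈ S, g.proj n (g.proj m x) := by
    conv_lhs => rw [hS]
    exact map_sum _ _ _
  rw [hproj, hS, map_sum, map_sum, map_sum, ← hS]
  refine Finset.sum_congr rfl fun m _ => ?_
  obtain rfl | hmn := eq_or_ne m n
  · rw [g'.proj_of_mem (hφ _ _ (g.proj_mem _ x)), g.proj_of_mem (g.proj_mem _ x)]
  · rw [g'.proj_of_mem_of_ne hmn (hφ _ _ (g.proj_mem _ x)),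
      g.proj_of_mem_of_ne hmn (g.proj_mem _ x), map_zero]

lemma exists_mem_map_eq {g' : ProjGrading N'} {φ : N →+ N'} (hφ : g.IsGraded g' φ) {n : ℤ}
    {y : N'} (hy : g'.mem n y) {x : N} (hx : φ x = y) : ∃ x', g.mem n x' ∧ φ x' = y :=
  ⟨g.proj n x, g.proj_mem n x, by rw [← proj_map hφ, hx, g'.proj_of_mem hy]⟩

variable {ι : Type} {w : ι → ℤ}

lemma finsupp_mem_single {n : ℤ} {a : ι} {v : N} (hv : g.mem (n - w a) v) :
    (g.finsupp w).mem n (Finsupp.single a v) := by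
  classical
  intro b
  rw [Finsupp.single_apply]
  split_ifs with h
  · exact h ▸ hv
  · exact g.zero_mem _

lemma IsGraded.mapRange {g' : ProjGrading N'} {φ : N →+ N'} (hφ : g.IsGraded g' φ) :
    (g.finsupp w).IsGraded (g'.finsupp w) (Finsupp.mapRange φ φ.map_zero) :=
  fun _ _ hf a => hφ _ _ (hf a)

end ProjGrading

section Exact

variable {R M N P : Type} [Ring R] [AddCommGroup M] [Module R M] [AddCommGroup N] [Module R N]
  [AddCommGroup P] [Module R P] {f : M →ₗ[R] N} {g : N →ₗ[R] P}

lemma Function.Exact.exists_eq_add_of_map_eq (h : Function.Exact f g) {x y : N}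
    (hxy : g x = g y) : ∃ z, x = f z + y := by
  obtain ⟨z, hz⟩ := (h (x - y)).1 (by rw [map_sub, hxy, sub_self])
  exact ⟨z, by rw [hz, sub_add_cancel]⟩

lemma Function.Exact.finsuppMapRange {ι : Type} (h : Function.Exact f g) :
    Function.Exact (Finsupp.mapRange.linearMap (α := ι) f) (Finsupp.mapRange.linearMap g) := by
  refine LinearMap.exact_iff.2 (le_antisymm ?_ ?_)
  · rw [Finsupp.ker_mapRange, LinearMap.exact_iff.1 h, Finsupp.submodule_eq_iSup]
    refine iSup_le fun i => ?_
    rintro _ ⟨_, ⟨z, rfl⟩, rfl⟩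
    exact ⟨Finsupp.single i z, by simp⟩
  · rintro _ ⟨x, rfl⟩
    ext i
    simp [h.apply_apply_eq_zero]

end Exact

namespace Finsupp

section Swap

variable {R A P : Type} [Semiring R]

def swap : (A →₀ P →₀ R) ≃ₗ[R] (P →₀ A →₀ R) :=
  (curryLinearEquiv R).symm ≪≫ₗ Finsupp.domLCongr (Equiv.prodComm A P) ≪≫ₗ curryLinearEquiv R

@[simp] lemma swap_apply_apply (f : A →₀ P →₀ R) (p : P) (a : A) : swap f p a = f a p := by
  simp [swap, Finsupp.domLCongr_apply]

@[simp] lemma swap_symm_apply_apply (f : P →₀ A →₀ R) (a : A) (p : P) :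
    swap.symm f a p = f p a := by
  rw [← swap_apply_apply, LinearEquiv.apply_symm_apply]

lemma swap_single_apply (a : A) (v : P →₀ R) (p : P) :
    swap (single a v) p = single a (v p) := by
  ext a'
  by_cases h : a = a' <;> simp [h]

lemma swap_symm_single_apply (p : P) (u : A →₀ R) (a : A) :
    swap.symm (single p u) a = single p (u a) := by
  ext p'
  by_cases h : p = p' <;> simp [h]

@[simp] lemma swap_single_single (a : A) (p : P) (r : R) :
    swap (single a (single p r)) = single p (single a r) := by
  ext p' a'
  rw [swap_single_apply]
  by_cases h : p = p' <;> simp [h]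

end Swap

lemma mapRange_swap_symm_mapRange_swap {R A B P P' : Type} [CommSemiring R]
    (L : (A →₀ R) →ₗ[R] (B →₀ R)) (T : (P →₀ R) →ₗ[R] (P' →₀ R)) (f : A →₀ P →₀ R) :
    mapRange.linearMap T (swap.symm (mapRange.linearMap L (swap f)))
      = swap.symm (mapRange.linearMap L (swap (mapRange.linearMap T f))) := by
  have h : mapRange.linearMap T ∘ₗ swap.symm.toLinearMap ∘ₗ mapRange.linearMap L ∘ₗ
      swap.toLinearMap = swap.symm.toLinearMap ∘ₗ mapRange.linearMap L ∘ₗ swap.toLinearMap ∘ₗ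
      mapRange.linearMap T := by
    ext a p b p'
    simp only [LinearMap.coe_comp, LinearEquiv.coe_coe, Function.comp_apply, lsingle_apply,
      mapRange.linearMap_apply, swap_single_single, mapRange_single, mapRange_apply,
      swap_symm_single_apply, swap_symm_apply_apply, swap_single_apply]
    rw [← smul_single_one p (L _ b), ← smul_single_one a (T _ p'), map_smul, map_smul]
    simp [mul_comm]
  exact LinearMap.congr_fun h f

lemma mem_ideal_smul_top_iff {R ι : Type} [CommRing R] (I : Ideal R) (x : ι →₀ R) :
    x ∈ I • (⊤ : Submodule R (ι →₀ R)) ↔ ∀ i, x i ∈ I := by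
  rw [← submodule_top, ← submodule_smul, mem_submodule_iff]
  simp

end Finsupp

lemma ProjGrading.finsupp_finsupp_mem_swap {R : Type} [Semiring R] (g : ProjGrading R)
    {A P : Type} {wA : A → ℤ} {wP : P → ℤ} {n : ℤ} {f : A →₀ P →₀ R} :
    ((g.finsupp wA).finsupp wP).mem n (Finsupp.swap f) ↔ ((g.finsupp wP).finsupp wA).mem n f := by
  simp only [ProjGrading.finsupp, Finsupp.swap_apply_apply, sub_right_comm _ (wP _)]
  exact forall_comm

namespace GradedFreeRes

variable {R₀ : Type} [CommRing R₀] {R : Type} [CommRing R] [Algebra R₀ R]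
  {𝒜 : ℤ → Submodule R₀ R}
  {M : Type} [AddCommGroup M] [Module R M] [Module R₀ M] {ℳ : ℤ → Submodule R₀ M}
  {N : Type} [AddCommGroup N] [Module R N] [Module R₀ N] {𝒩 : ℤ → Submodule R₀ N}
  (F : GradedFreeRes R₀ R 𝒜 M ℳ) (G : GradedFreeRes R₀ R 𝒜 N 𝒩)

/-- `F_p ⊗_R G_q`, indexed by the basis of `G_q` with values in `F_p`. -/
abbrev tensorTerm (p q : ℕ) : Type := (Σ j : ℤ, Fin (G.β q j)) →₀ stdFree R (F.β p)

/-- `d ⊗ 1`. -/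
def dV (p q : ℕ) : F.tensorTerm G (p + 1) q →ₗ[R] F.tensorTerm G p q :=
  Finsupp.mapRange.linearMap (F.d p)

/-- `1 ⊗ d`, computed on the basis of `F_p` after exchanging the two indices. -/
def dH (p q : ℕ) : F.tensorTerm G p (q + 1) →ₗ[R] F.tensorTerm G p q :=
  Finsupp.swap.symm.toLinearMap ∘ₗ Finsupp.mapRange.linearMap (G.d q) ∘ₗ
    Finsupp.swap.toLinearMap

lemma swap_dH (p q : ℕ) (u : F.tensorTerm G p (q + 1)) :
    Finsupp.swap (F.dH G p q u) = Finsupp.mapRange.linearMap (G.d q) (Finsupp.swap u) := by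
  simp [dH]

lemma dV_dV (p q : ℕ) (u : F.tensorTerm G (p + 2) q) : F.dV G p q (F.dV G (p + 1) q u) = 0 :=
  (F.exact p).finsuppMapRange.apply_apply_eq_zero u

lemma dH_dH (p q : ℕ) (u : F.tensorTerm G p (q + 2)) : F.dH G p q (F.dH G p (q + 1) u) = 0 := by
  apply Finsupp.swap.injective
  rw [swap_dH, swap_dH, map_zero]
  exact (G.exact q).finsuppMapRange.apply_apply_eq_zero _

lemma dH_dV (p q : ℕ) (u : F.tensorTerm G (p + 1) (q + 1)) :
    F.dH G p q (F.dV G p (q + 1) u) = F.dV G p q (F.dH G (p + 1) q u) :=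
  (Finsupp.mapRange_swap_symm_mapRange_swap _ _ u).symm

lemma exact_dV (p q : ℕ) : Function.Exact (F.dV G (p + 1) q) (F.dV G p q) :=
  (F.exact p).finsuppMapRange

lemma exact_dH (p q : ℕ) : Function.Exact (F.dH G p (q + 1)) (F.dH G p q) := by
  refine Function.Exact.of_ladder_linearEquiv_of_exact (e₁ := Finsupp.swap.symm)
    (e₂ := Finsupp.swap.symm) (e₃ := Finsupp.swap.symm) ?_ ?_ (G.exact q).finsuppMapRange <;>
  · ext; simp [dH]

/-- The invariant of the staircase chase (vacuous in column `0`, where `dV` would be the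
augmentation). -/
def IsCycleModDH : (p q : ℕ) → F.tensorTerm G p q → Prop
  | 0, _, _ => True
  | p + 1, q, u => F.dV G p q u ∈ LinearMap.range (F.dH G p q)

end GradedFreeRes

section Graded

variable {R₀ : Type} [CommRing R₀] {R : Type} [CommRing R] [Algebra R₀ R]
  (𝒜 : ℤ → Submodule R₀ R) [DirectSum.Decomposition 𝒜]

/-- Its homogeneous elements are, by definition, those of `stdFreeGrading`. -/
def stdFreeProjGrading (β : ℤ → ℕ) : ProjGrading (stdFree R β) :=
  (ProjGrading.ofDecomposition 𝒜).finsupp Sigma.fst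

namespace GradedFreeRes

variable {𝒜}
  {M : Type} [AddCommGroup M] [Module R M] [Module R₀ M] {ℳ : ℤ → Submodule R₀ M}
  {N : Type} [AddCommGroup N] [Module R N] [Module R₀ N] {𝒩 : ℤ → Submodule R₀ N}
  (F : GradedFreeRes R₀ R 𝒜 M ℳ) (G : GradedFreeRes R₀ R 𝒜 N 𝒩)

def tensorGrading (p q : ℕ) : ProjGrading (F.tensorTerm G p q) :=
  (stdFreeProjGrading 𝒜 (F.β p)).finsupp Sigma.fst

lemma isGraded_d (i : ℕ) :
    (stdFreeProjGrading 𝒜 _).IsGraded (stdFreeProjGrading 𝒜 _) (F.d i) :=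
  F.graded_d i

lemma isGraded_dV (p q : ℕ) :
    (F.tensorGrading G (p + 1) q).IsGraded (F.tensorGrading G p q) (F.dV G p q) :=
  ProjGrading.IsGraded.mapRange (φ := (F.d p).toAddMonoidHom) (F.isGraded_d p)

lemma isGraded_dH (p q : ℕ) :
    (F.tensorGrading G p (q + 1)).IsGraded (F.tensorGrading G p q) (F.dH G p q) := by
  intro n u hu
  refine (ProjGrading.finsupp_finsupp_mem_swap (ProjGrading.ofDecomposition 𝒜)).1 ?_
  rw [swap_dH]
  exact ProjGrading.IsGraded.mapRange (φ := (G.d q).toAddMonoidHom) (G.isGraded_d q) n _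
    ((ProjGrading.finsupp_finsupp_mem_swap _).2 hu)

lemma mem_range_dV_zero {q : ℕ} {j : ℤ} (hbot : ∀ j', G.β q j' ≠ 0 → ℳ (j - j') = ⊥)
    {u : F.tensorTerm G 0 q} (hu : (F.tensorGrading G 0 q).mem j u) :
    u ∈ LinearMap.range (F.dV G 0 q) := by
  refine (F.exact_aug.finsuppMapRange u).1 (Finsupp.ext fun b => ?_)
  have haug := F.graded_aug _ _ (hu b)
  rw [hbot b.1 b.2.pos.ne'] at haug
  simpa using haug

/-- Staircase chase: lift homogeneously along `dH` down to column `0`, where `M_{j - j'} = 0` makes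
every homogeneous element of degree `j` a `dV`-boundary, then climb back up. -/
lemma exists_eq_dV_add_dH {i : ℕ} {j : ℤ} (hbot : ∀ j', G.β i j' ≠ 0 → ℳ (j - j') = ⊥) :
    ∀ p q, p + q = i → ∀ u : F.tensorTerm G p q, (F.tensorGrading G p q).mem j u →
      F.IsCycleModDH G p q u → ∃ w w', u = F.dV G p q w + F.dH G p q w' := by
  intro p
  induction p with
  | zero =>
    intro q hq u hu _
    obtain rfl : q = i := by omega
    obtain ⟨w, rfl⟩ := F.mem_range_dV_zero G hbot hu
    exact ⟨w, 0, by simp⟩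
  | succ p ih =>
    rintro q hpq u hu ⟨t, ht⟩
    obtain ⟨u', hu', hdH⟩ := ProjGrading.exists_mem_map_eq (φ := (F.dH G p q).toAddMonoidHom)
      (F.isGraded_dH G p q) (F.isGraded_dV G p q j u hu) ht
    change F.dH G p q u' = F.dV G p q u at hdH
    have hcyc : F.IsCycleModDH G p (q + 1) u' := by
      cases p with
      | zero => trivial
      | succ p => exact (F.exact_dH G p q _).1 (by rw [F.dH_dV, hdH, F.dV_dV])
    obtain ⟨w, w', rfl⟩ := ih (q + 1) (by omega) u' hu' hcyc
    have hdV : F.dV G p q u = F.dV G p q (F.dH G (p + 1) q w) := by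
      rw [← hdH, map_add, F.dH_dH, add_zero, F.dH_dV]
    -- naming the modules lets their `AddCommGroup` instances be found before unification
    obtain ⟨w'', hw''⟩ := Function.Exact.exists_eq_add_of_map_eq (M := F.tensorTerm G (p + 2) q)
      (N := F.tensorTerm G (p + 1) q) (P := F.tensorTerm G p q) (F.exact_dV G p q) hdV
    exact ⟨w'', w, hw''⟩

end GradedFreeRes

end Graded

lemma Ideal.Quotient.smul_eq_zero_of_mem {R : Type} [CommRing R] {I : Ideal R} {r : R}
    (hr : r ∈ I) (z : R ⧸ I) : r • z = 0 := by
  rw [Algebra.smul_def, Ideal.Quotient.algebraMap_eq, Ideal.Quotient.eq_zero_iff_mem.2 hr,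
    zero_mul]

lemma Finsupp.map_quotient_eq_zero_of_forall_mem {R ι : Type} [CommRing R] {I : Ideal R}
    (φ : (ι →₀ R) →ₗ[R] R ⧸ I) {x : ι →₀ R} (hx : ∀ i, x i ∈ I) : φ x = 0 := by
  rw [← x.sum_single, map_finsuppSum]
  refine Finset.sum_eq_zero fun i _ => ?_
  dsimp only
  rw [← Finsupp.smul_single_one, map_smul, Ideal.Quotient.smul_eq_zero_of_mem (hx i)]

section MinimalResolution

variable {R₀ : Type} [CommRing R₀] {R : Type} [CommRing R] [Algebra R₀ R]
  {𝒜 : ℤ → Submodule R₀ R} {I : Ideal R}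
  {M : Type} [AddCommGroup M] [Module R M] [Module R₀ M] {ℳ : ℤ → Submodule R₀ M}
  {𝒩 : ℤ → Submodule R₀ (R ⧸ I)}
  (F : MinGradedFreeRes R₀ R 𝒜 M I ℳ) (G : GradedFreeRes R₀ R 𝒜 (R ⧸ I) 𝒩)

namespace MinGradedFreeRes

lemma d_apply_mem (i : ℕ) (x : stdFree R (F.β (i + 1))) (a : Σ j, Fin (F.β i j)) :
    F.d i x a ∈ I :=
  (Finsupp.mem_ideal_smul_top_iff I _).1 (F.minimal i ⟨x, rfl⟩) a

/-- Minimality makes `F ⊗ G → F ⊗ (R ⧸ I)` kill the image of `d ⊗ 1`. -/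
lemma aug_swap_dV_apply (p : ℕ) (w : F.tensorTerm G (p + 1) 0) (a : Σ j, Fin (F.β p j)) :
    G.aug (Finsupp.swap (F.dV G p 0 w) a) = 0 :=
  Finsupp.map_quotient_eq_zero_of_forall_mem _ fun b => by
    simpa [GradedFreeRes.dV] using F.d_apply_mem p (w b) a

lemma isCycleModDH_zero (i : ℕ) (u : F.tensorTerm G i 0) : F.IsCycleModDH G i 0 u := by
  cases i with
  | zero => trivial
  | succ p =>
    obtain ⟨z, hz⟩ := (G.exact_aug.finsuppMapRange (Finsupp.swap (F.dV G p 0 u))).1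
      (Finsupp.ext fun a => F.aug_swap_dV_apply G p u a)
    refine ⟨Finsupp.swap.symm z, Finsupp.swap.injective ?_⟩
    rw [GradedFreeRes.swap_dH, LinearEquiv.apply_symm_apply, hz]

end MinGradedFreeRes

end MinimalResolution

section ResidueField

open IsLocalRing

variable {R₀ : Type} [CommRing R₀] [IsLocalRing R₀] {R : Type} [CommRing R] [Algebra R₀ R]
  {𝒜 : ℤ → Submodule R₀ R}

lemma mem_resFieldGrading_iff {n : ℤ} {x : resField R₀ R 𝒜} :
    x ∈ resFieldGrading R₀ R 𝒜 n ↔ n = 0 ∨ x = 0 := by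
  unfold resFieldGrading
  split_ifs with hn <;> simp [hn]

variable [GradedAlgebra 𝒜]

/-- Quantifying over all multiples `r * x` makes the property stable under multiplication, so it
can be checked on the generators of `m₀R + R₊`. -/
lemma decompose_mul_zero_mem_of_mem_gradedMax (hstd : IsStandardGraded R₀ R 𝒜) {x : R}
    (hx : x ∈ gradedMax R₀ R 𝒜) (r : R) :
    (DirectSum.decompose 𝒜 (r * x) 0 : R) ∈
      Submodule.map (Algebra.linearMap R₀ R) (maximalIdeal R₀) := by
  rw [gradedMax, irrelevant, ← Ideal.span_union] at hx
  induction hx using Submodule.span_induction generalizing r with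
  | mem x hx =>
    rcases hx with hx | ⟨c, hc, rfl⟩
    · obtain ⟨⟨n, hn⟩, hxn⟩ := Set.mem_iUnion.1 hx
      have hdeg := DirectSum.coe_decompose_mul_add_of_right_mem 𝒜 (i := -n) (a := r) hxn
      rw [neg_add_cancel] at hdeg
      have hneg : (DirectSum.decompose 𝒜 r (-n) : R) = 0 := by
        simpa [hstd.1 (-n) (by omega)] using (DirectSum.decompose 𝒜 r (-n)).2
      rw [hdeg, hneg, zero_mul]
      exact Submodule.zero_mem _
    · rw [DirectSum.coe_decompose_mul_of_right_mem_zero 𝒜 (SetLike.algebraMap_mem_graded 𝒜 c)]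
      have hr0 : (DirectSum.decompose 𝒜 r 0 : R) ∈ (1 : Submodule R₀ R) :=
        hstd.2.1 ▸ (DirectSum.decompose 𝒜 r 0).2
      obtain ⟨d, hd⟩ := Submodule.mem_one.1 hr0
      exact ⟨d * c, Ideal.mul_mem_left _ d hc, by simp [← hd]⟩
  | zero => simp
  | add x y _ _ hx hy =>
    rw [mul_add, DirectSum.decompose_add, DirectSum.add_apply, Submodule.coe_add]
    exact Submodule.add_mem _ (hx r) (hy r)
  | smul a x _ hx =>
    rw [smul_eq_mul, ← mul_assoc]
    exact hx (r * a)

lemma gradedMax_ne_top [Nontrivial R] (hstd : IsStandardGraded R₀ R 𝒜) :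
    gradedMax R₀ R 𝒜 ≠ ⊤ := by
  intro htop
  obtain ⟨c, hc, hc1⟩ := decompose_mul_zero_mem_of_mem_gradedMax hstd (htop ▸ Submodule.mem_top) 1
  rw [one_mul, DirectSum.decompose_of_mem_same 𝒜 SetLike.GradedOne.one_mem] at hc1
  have hunit := (isUnit_one_sub_self_of_mem_nonunits c hc).map (algebraMap R₀ R)
  rw [map_sub, map_one, ← Algebra.linearMap_apply, hc1, sub_self] at hunit
  exact not_isUnit_zero hunit

end ResidueField

section Regularity

variable {R₀ : Type} [CommRing R₀] {R : Type} [CommRing R] [Algebra R₀ R]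
  {𝒜 : ℤ → Submodule R₀ R} [DirectSum.Decomposition 𝒜]
  {M : Type} [AddCommGroup M] [Module R M] [Module R₀ M] {ℳ : ℤ → Submodule R₀ M}
  [DirectSum.Decomposition ℳ] (F : GradedFreeRes R₀ R 𝒜 M ℳ)

namespace GradedFreeRes

lemma exists_betti_zero_ne_zero_le (hneg : ∀ n < 0, 𝒜 n = ⊥) {n : ℤ} (hn : ℳ n ≠ ⊥) :
    ∃ j, F.β 0 j ≠ 0 ∧ j ≤ n := by
  obtain ⟨m, hm, hm0⟩ := Submodule.exists_mem_ne_zero_of_ne_bot hn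
  obtain ⟨f₀, hf₀⟩ := F.aug_surj m
  obtain ⟨f, hf, rfl⟩ := ProjGrading.exists_mem_map_eq (g := stdFreeProjGrading 𝒜 _)
    (g' := ProjGrading.ofDecomposition ℳ) (φ := F.aug.toAddMonoidHom) F.graded_aug hm hf₀
  obtain ⟨a, ha⟩ := Finsupp.ne_iff.1 (show f ≠ 0 by rintro rfl; exact hm0 (map_zero _))
  refine ⟨a.1, a.2.pos.ne', ?_⟩
  by_contra! hlt
  have hfa : f a ∈ 𝒜 (n - a.1) := hf a
  rw [hneg _ (by omega)] at hfa
  exact ha (by simpa using hfa)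

lemma exists_betti_zero_ne_zero_mem_lowerBounds (hneg : ∀ n < 0, 𝒜 n = ⊥)
    (hne : (degSet ℳ).Nonempty) : ∃ j₀, F.β 0 j₀ ≠ 0 ∧ j₀ ∈ lowerBounds (degSet ℳ) := by
  obtain ⟨n₀, hn₀⟩ := hne
  obtain ⟨j₁, hj₁, -⟩ := F.exists_betti_zero_ne_zero_le hneg hn₀
  obtain ⟨j₀, hj₀, hmin⟩ := Set.exists_min_image _ id (F.finite 0) ⟨j₁, hj₁⟩
  refine ⟨j₀, hj₀, fun n hn => ?_⟩
  obtain ⟨j, hj, hjn⟩ := F.exists_betti_zero_ne_zero_le hneg hn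
  exact (hmin j hj).trans hjn

end GradedFreeRes

end Regularity

section TorBound

variable {R₀ : Type} [CommRing R₀] [IsLocalRing R₀] {R : Type} [CommRing R] [Algebra R₀ R]
  {𝒜 : ℤ → Submodule R₀ R} [GradedAlgebra 𝒜]
  {M : Type} [AddCommGroup M] [Module R M] [Module R₀ M] {ℳ : ℤ → Submodule R₀ M}

lemma GradedFreeRes.exists_mem_aug_eq_one
    (G : GradedFreeRes R₀ R 𝒜 (resField R₀ R 𝒜) (resFieldGrading R₀ R 𝒜)) :
    ∃ y ∈ stdFreeGrading R₀ R 𝒜 (G.β 0) 0, G.aug y = 1 := by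
  obtain ⟨f, hf⟩ := G.aug_surj 1
  exact ProjGrading.exists_mem_map_eq (g := stdFreeProjGrading 𝒜 _)
    (g' := ProjGrading.degreeZero) (φ := G.aug.toAddMonoidHom)
    (fun n x hx => mem_resFieldGrading_iff.1 (G.graded_aug n x hx)) (Or.inl rfl) hf

/-- Balancing `Tor_i(M, k)_j`: the basis vector `e` of `F_i` in degree `j` gives the cycle `e ⊗ y`
of `F ⊗ G` (`y ∈ G_0` a homogeneous lift of `1`). If `M ⊗ G_i` vanished in degree `j`, the chase
would make it a boundary; but boundaries map to `0` in `F ⊗ k` (by minimality of `F` and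
exactness of `G`), while `e ⊗ y` maps to `e ⊗ 1 ≠ 0`. -/
theorem MinGradedFreeRes.exists_betti_ne_zero_and_ne_bot [Nontrivial R]
    (F : MinGradedFreeRes R₀ R 𝒜 M (gradedMax R₀ R 𝒜) ℳ)
    (G : GradedFreeRes R₀ R 𝒜 (resField R₀ R 𝒜) (resFieldGrading R₀ R 𝒜))
    (hstd : IsStandardGraded R₀ R 𝒜) {i : ℕ} {j : ℤ} (hij : F.β i j ≠ 0) :
    ∃ j', G.β i j' ≠ 0 ∧ ℳ (j - j') ≠ ⊥ := by
  by_contra! hbot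
  have : Nontrivial (resField R₀ R 𝒜) := Ideal.Quotient.nontrivial_iff.2 (gradedMax_ne_top hstd)
  let e : Σ j', Fin (F.β i j') := ⟨j, ⟨0, Nat.pos_of_ne_zero hij⟩⟩
  obtain ⟨y, hy, hy1⟩ := G.exists_mem_aug_eq_one
  have hu : (F.tensorGrading G i 0).mem j (Finsupp.swap.symm (Finsupp.single e y)) := by
    refine (ProjGrading.finsupp_finsupp_mem_swap (ProjGrading.ofDecomposition 𝒜)).1 ?_
    rw [LinearEquiv.apply_symm_apply]
    refine ProjGrading.finsupp_mem_single ?_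
    rw [sub_self]
    exact hy
  obtain ⟨w, w', hw⟩ := F.exists_eq_dV_add_dH G hbot i 0 rfl _ hu (F.isCycleModDH_zero G i _)
  have h := congrArg (fun v => G.aug (Finsupp.swap v e)) hw
  simp only [LinearEquiv.apply_symm_apply, Finsupp.single_eq_same, hy1, map_add,
    Finsupp.add_apply, F.aug_swap_dV_apply, GradedFreeRes.swap_dH, Finsupp.mapRange.linearMap_apply,
    Finsupp.mapRange_apply, G.exact_aug.apply_apply_eq_zero, add_zero] at h
  exact one_ne_zero h

end TorBound

theorem stmt12_general (R₀ : Type) [CommRing R₀] [IsLocalRing R₀]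
    (R : Type) [CommRing R] [Algebra R₀ R]
    (𝒜 : ℤ → Submodule R₀ R) [GradedAlgebra 𝒜] (hstd : IsStandardGraded R₀ R 𝒜)
    (M : Type) [AddCommGroup M] [Module R M] [Module R₀ M]
    (ℳ : ℤ → Submodule R₀ M) [DirectSum.Decomposition ℳ] (hMne : (degSet ℳ).Nonempty)
    (FM : MinGradedFreeRes R₀ R 𝒜 M (gradedMax R₀ R 𝒜) ℳ)
    (Fk : MinGradedFreeRes R₀ R 𝒜 (resField R₀ R 𝒜) (gradedMax R₀ R 𝒜)
      (resFieldGrading R₀ R 𝒜)) :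
    (∃ z ∈ regSet R₀ R 𝒜 _ FM, 0 ≤ z + indeg ℳ) ∧
    (∀ z ∈ regSet R₀ R 𝒜 _ FM, ∃ z' ∈ regSet R₀ R 𝒜 _ Fk, z + indeg ℳ ≤ z') := by
  have : Nontrivial R := by
    obtain ⟨n, hn⟩ := hMne
    obtain ⟨x, -, hx⟩ := Submodule.exists_mem_ne_zero_of_ne_bot hn
    have : Nontrivial M := ⟨⟨x, 0, hx⟩⟩
    exact Module.nontrivial R M
  obtain ⟨j₀, hj₀, hlow⟩ := FM.exists_betti_zero_ne_zero_mem_lowerBounds hstd.1 hMne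
  have hj₀_le : j₀ ≤ indeg ℳ := le_csInf hMne hlow
  refine ⟨⟨0 - j₀, ⟨0, j₀, hj₀, rfl⟩, by omega⟩, ?_⟩
  rintro _ ⟨i, j, hij, rfl⟩
  obtain ⟨j', hj', hne⟩ := FM.exists_betti_ne_zero_and_ne_bot Fk.toGradedFreeRes hstd hij
  have hindeg_le : indeg ℳ ≤ j - j' := csInf_le ⟨j₀, hlow⟩ hne
  exact ⟨i - j', ⟨i, j', hj', rfl⟩, by omega⟩

/-- `0 ≤ reg_R(M,k) + indeg M ≤ reg_R(k,k)` for `M ≠ 0`, where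
`reg_R(M,k) = max_i {i − indeg Tor_i^R(M,k)}` is read off from minimal graded free
resolutions. -/
theorem stmt12 (R₀ : Type) [CommRing R₀] [IsLocalRing R₀]
    (R : Type) [CommRing R] [Algebra R₀ R] [IsNoetherianRing R]
    (𝒜 : ℤ → Submodule R₀ R) [GradedAlgebra 𝒜] (hstd : IsStandardGraded R₀ R 𝒜)
    (M : Type) [AddCommGroup M] [Module R M] [Module R₀ M] [Module.Finite R M]
    (ℳ : ℤ → Submodule R₀ M) [DirectSum.Decomposition ℳ] (hMne : (degSet ℳ).Nonempty)
    (FM : MinGradedFreeRes R₀ R 𝒜 M (gradedMax R₀ R 𝒜) ℳ)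
    (Fk : MinGradedFreeRes R₀ R 𝒜 (resField R₀ R 𝒜) (gradedMax R₀ R 𝒜)
      (resFieldGrading R₀ R 𝒜)) :
    (∃ z ∈ regSet R₀ R 𝒜 _ FM, 0 ≤ z + indeg ℳ) ∧
    (∀ z ∈ regSet R₀ R 𝒜 _ FM, ∃ z' ∈ regSet R₀ R 𝒜 _ Fk, z + indeg ℳ ≤ z') :=
  stmt12_general R₀ R 𝒜 hstd M ℳ hMne FM Fk
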